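/- Suppose K̃ : [0,∞) → ℝ is C¹, there exist ζ₀ > 0 and C > 0 with K̃'(ζ) ≥ C for all ζ ≥ ζ₀, and K̃(ζ) ≥ c ζ^η for some c, η > 0. Let β > 0 and q ≥ 0. Then the function F(ζ) = e^{β K̃(ζ)} ∫_ζ^∞ e^{-β K̃(s)} s^{q} ds is well-defined and polynomially bounded on [ζ₀,∞), i.e. there exist C' > 0 and r > 0 with F(ζ) ≤ C'(1 + ζ^r) for all ζ ≥ ζ₀. -/

import Mathlib

open MeasureTheory Set

theorem poly_bound_exp_integral (Ktil : ℝ → ℝ) (hK : ContDiffOn ℝ 1 Ktil (Set.Ici 0))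
    (ζ₀ C c η β q : ℝ) (hζ₀ : 0 < ζ₀) (hC : 0 < C)
    (hK' : ∀ ζ ≥ ζ₀, C ≤ deriv Ktil ζ)
    (hc : 0 < c) (hη : 0 < η) (hlow : ∀ ζ ≥ (0:ℝ), c * ζ ^ η ≤ Ktil ζ)
    (hβ : 0 < β) (hq : 0 ≤ q) :
    (∀ ζ ≥ ζ₀, IntegrableOn (fun s => Real.exp (-β * Ktil s) * s ^ q) (Set.Ici ζ)) ∧
    ∃ C' > (0:ℝ), ∃ r > (0:ℝ), ∀ ζ ≥ ζ₀,
      Real.exp (β * Ktil ζ) * (∫ s in Set.Ici ζ, Real.exp (-β * Ktil s) * s ^ q)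
        ≤ C' * (1 + ζ ^ r) := by
  set b : ℝ := β * C with hb_def
  have hb : 0 < b := mul_pos hβ hC
  -- differentiability at positive points
  have hdiff : ∀ x : ℝ, 0 < x → DifferentiableAt ℝ Ktil x := fun x hx =>
    ((hK.differentiableOn one_ne_zero) x (le_of_lt hx)).differentiableAt (Ici_mem_nhds hx)
  -- monotonicity of Ktil x - C x on Ici ζ₀
  have hmono : MonotoneOn (fun x => Ktil x - C * x) (Ici ζ₀) := by
    apply monotoneOn_of_deriv_nonneg (convex_Ici ζ₀)
    · exact (hK.continuousOn.mono (fun x hx => le_trans hζ₀.le hx)).sub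
        (continuousOn_const.mul continuousOn_id)
    · intro x hx
      rw [interior_Ici] at hx
      have hx0 : 0 < x := lt_trans hζ₀ hx
      exact ((hdiff x hx0).sub ((differentiableAt_id.const_mul C))).differentiableWithinAt
    · intro x hx
      rw [interior_Ici] at hx
      have hx0 : 0 < x := lt_trans hζ₀ hx
      have hd : deriv (fun x => Ktil x - C * x) x = deriv Ktil x - C := by
        have h1 : HasDerivAt (fun x => Ktil x - C * x) (deriv Ktil x - C * 1) x :=
          (hdiff x hx0).hasDerivAt.sub ((hasDerivAt_id x).const_mul C)
        simpa using h1.deriv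
      rw [hd]
      have := hK' x hx.le
      linarith
  -- key growth bound
  have hgrow : ∀ ζ ≥ ζ₀, ∀ s, ζ ≤ s → Ktil ζ + C * (s - ζ) ≤ Ktil s := by
    intro ζ hζ s hs
    have := hmono (show ζ ∈ Ici ζ₀ from hζ) (show s ∈ Ici ζ₀ from le_trans hζ hs) hs
    simp only at this
    linarith [this]
  -- integrability of the exponential majorant
  have hI0 : IntegrableOn (fun x : ℝ => Real.exp (-b * x) * x ^ q) (Ioi 0) := by
    have h := integrableOn_rpow_mul_exp_neg_mul_rpow (p := 1) (s := q) (b := b)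
      (by linarith) one_pos hb
    simpa [Real.rpow_one, mul_comm] using h
  -- pointwise bound of the integrand
  have hpt : ∀ ζ ≥ ζ₀, ∀ s ∈ Ici ζ,
      Real.exp (-β * Ktil s) * s ^ q ≤
        (Real.exp (-β * Ktil ζ) * Real.exp (b * ζ)) * (Real.exp (-b * s) * s ^ q) := by
    intro ζ hζ s hs
    have hs' : ζ ≤ s := hs
    have hKs := hgrow ζ hζ s hs'
    have hsq : (0:ℝ) ≤ s ^ q := Real.rpow_nonneg (le_trans (le_trans hζ₀.le hζ) hs') q
    have hexp : Real.exp (-β * Ktil s) ≤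
        Real.exp (-β * Ktil ζ) * Real.exp (b * ζ) * Real.exp (-b * s) := by
      rw [← Real.exp_add, ← Real.exp_add]
      apply Real.exp_le_exp.2
      have : β * (Ktil ζ + C * (s - ζ)) ≤ β * Ktil s := by
        exact mul_le_mul_of_nonneg_left hKs hβ.le
      rw [hb_def]; nlinarith
    calc Real.exp (-β * Ktil s) * s ^ q
        ≤ (Real.exp (-β * Ktil ζ) * Real.exp (b * ζ) * Real.exp (-b * s)) * s ^ q :=
          mul_le_mul_of_nonneg_right hexp hsq
      _ = (Real.exp (-β * Ktil ζ) * Real.exp (b * ζ)) * (Real.exp (-b * s) * s ^ q) := by ring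
  -- measurability of the integrand
  have hmeas : ∀ ζ ≥ ζ₀, AEStronglyMeasurable (fun s => Real.exp (-β * Ktil s) * s ^ q)
      (volume.restrict (Ici ζ)) := by
    intro ζ hζ
    have hcont : ContinuousOn (fun s => Real.exp (-β * Ktil s) * s ^ q) (Ici ζ) := by
      apply ContinuousOn.mul
      · exact Real.continuous_exp.comp_continuousOn
          (continuousOn_const.mul (hK.continuousOn.mono
            (fun x hx => le_trans (le_trans hζ₀.le hζ) hx)))
      · exact continuousOn_id.rpow_const (fun x _ => Or.inr hq)
    exact hcont.aestronglyMeasurable measurableSet_Ici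
  -- integrability part
  have hint : ∀ ζ ≥ ζ₀, IntegrableOn (fun s => Real.exp (-β * Ktil s) * s ^ q) (Ici ζ) := by
    intro ζ hζ
    have hζpos : 0 < ζ := lt_of_lt_of_le hζ₀ hζ
    have hmaj : IntegrableOn (fun s : ℝ =>
        (Real.exp (-β * Ktil ζ) * Real.exp (b * ζ)) * (Real.exp (-b * s) * s ^ q)) (Ici ζ) :=
      (hI0.mono_set (fun x hx => lt_of_lt_of_le hζpos hx)).const_mul _
    apply hmaj.mono' (hmeas ζ hζ)
    filter_upwards [self_mem_ae_restrict (measurableSet_Ici : MeasurableSet (Ici ζ))] with s hs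
    have hs0 : (0:ℝ) ≤ s := le_trans hζpos.le hs
    have h1 : (0:ℝ) ≤ Real.exp (-β * Ktil s) * s ^ q :=
      mul_nonneg (Real.exp_pos _).le (Real.rpow_nonneg hs0 q)
    rw [Real.norm_eq_abs, abs_of_nonneg h1]
    exact hpt ζ hζ s hs
  refine ⟨hint, ?_⟩
  -- constants
  set G : ℝ := ∫ u in Ici (0:ℝ), Real.exp (-b * u) * u ^ q with hG_def
  set E : ℝ := ∫ u in Ici (0:ℝ), Real.exp (-b * u) with hE_def
  have hG_int : IntegrableOn (fun u : ℝ => Real.exp (-b * u) * u ^ q) (Ici 0) :=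
    (integrableOn_Ici_iff_integrableOn_Ioi).2 hI0
  have hE_int : IntegrableOn (fun u : ℝ => Real.exp (-b * u)) (Ici 0) :=
    (integrableOn_Ici_iff_integrableOn_Ioi).2 (exp_neg_integrableOn_Ioi 0 hb)
  have hG_nonneg : 0 ≤ G := setIntegral_nonneg measurableSet_Ici (fun u hu =>
    mul_nonneg (Real.exp_pos _).le (Real.rpow_nonneg hu q))
  have hE_nonneg : 0 ≤ E := setIntegral_nonneg measurableSet_Ici (fun u _ => (Real.exp_pos _).le)
  have h2q : (0:ℝ) < 2 ^ q := Real.rpow_pos_of_pos two_pos q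
  set D : ℝ := 2 ^ q * (G + E) + 1 with hD_def
  have hD_pos : 0 < D := by positivity
  refine ⟨2 * D, by positivity, q + 1, by linarith, ?_⟩
  intro ζ hζ
  have hζpos : 0 < ζ := lt_of_lt_of_le hζ₀ hζ
  -- step 1: compare with the majorant
  have step1 : (∫ s in Ici ζ, Real.exp (-β * Ktil s) * s ^ q) ≤
      (Real.exp (-β * Ktil ζ) * Real.exp (b * ζ)) * ∫ s in Ici ζ, Real.exp (-b * s) * s ^ q := by
    rw [← integral_const_mul]
    apply integral_mono_of_nonneg
    · filter_upwards [self_mem_ae_restrict (measurableSet_Ici : MeasurableSet (Ici ζ))] with s hs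
      exact mul_nonneg (Real.exp_pos _).le (Real.rpow_nonneg (le_trans hζpos.le hs) q)
    · exact (hI0.mono_set (fun x hx => lt_of_lt_of_le hζpos hx)).const_mul _
    · filter_upwards [self_mem_ae_restrict (measurableSet_Ici : MeasurableSet (Ici ζ))] with s hs
      exact hpt ζ hζ s hs
  -- step 2: translation
  have step2 : (∫ s in Ici ζ, Real.exp (-b * s) * s ^ q) =
      ∫ u in Ici (0:ℝ), Real.exp (-b * (u + ζ)) * (u + ζ) ^ q := by
    have h := (measurePreserving_add_right (volume : Measure ℝ) ζ).setIntegral_preimage_emb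
      (MeasurableEquiv.addRight ζ).measurableEmbedding
      (fun s => Real.exp (-b * s) * s ^ q) (Ici ζ)
    have hpre : (· + ζ) ⁻¹' Ici ζ = Ici (0:ℝ) := by ext x; simp
    rw [hpre] at h
    exact h.symm
  -- step 3: bound the translated integral
  have step3 : Real.exp (b * ζ) * (∫ u in Ici (0:ℝ), Real.exp (-b * (u + ζ)) * (u + ζ) ^ q)
      ≤ 2 ^ q * (G + ζ ^ q * E) := by
    rw [← integral_const_mul]
    have hrhs : (2:ℝ) ^ q * (G + ζ ^ q * E) =
        ∫ u in Ici (0:ℝ), 2 ^ q * (Real.exp (-b * u) * u ^ q + ζ ^ q * Real.exp (-b * u)) := by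
      rw [integral_const_mul, integral_add hG_int (hE_int.const_mul _), integral_const_mul]
    rw [hrhs]
    apply integral_mono_of_nonneg
    · filter_upwards [self_mem_ae_restrict (measurableSet_Ici : MeasurableSet (Ici (0:ℝ)))]
        with u hu
      have hu0 : (0:ℝ) ≤ u := hu
      positivity
    · exact (hG_int.add (hE_int.const_mul _)).const_mul _
    · filter_upwards [self_mem_ae_restrict (measurableSet_Ici : MeasurableSet (Ici (0:ℝ)))]
        with u hu
      have hu0 : (0:ℝ) ≤ u := hu
      have hexp_eq : Real.exp (b * ζ) * Real.exp (-b * (u + ζ)) = Real.exp (-b * u) := by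
        rw [← Real.exp_add]; ring_nf
      have hsum : (u + ζ) ^ q ≤ 2 ^ q * (u ^ q + ζ ^ q) := by
        have hmax : u + ζ ≤ 2 * max u ζ := by
          have := le_max_left u ζ; have := le_max_right u ζ; linarith
        have h1 : (u + ζ) ^ q ≤ (2 * max u ζ) ^ q :=
          Real.rpow_le_rpow (by linarith) hmax hq
        have h2 : (2 * max u ζ) ^ q = 2 ^ q * (max u ζ) ^ q :=
          Real.mul_rpow (by norm_num) (le_max_of_le_right hζpos.le)
        have h3 : (max u ζ) ^ q ≤ u ^ q + ζ ^ q := by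
          rcases le_total u ζ with h | h
          · rw [max_eq_right h]
            have := Real.rpow_nonneg hu0 q; linarith
          · rw [max_eq_left h]
            have := Real.rpow_nonneg hζpos.le q; linarith
        calc (u + ζ) ^ q ≤ (2 * max u ζ) ^ q := h1
          _ = 2 ^ q * (max u ζ) ^ q := h2
          _ ≤ 2 ^ q * (u ^ q + ζ ^ q) := by nlinarith
      calc Real.exp (b * ζ) * (Real.exp (-b * (u + ζ)) * (u + ζ) ^ q)
          = Real.exp (-b * u) * (u + ζ) ^ q := by rw [← mul_assoc, hexp_eq]
        _ ≤ Real.exp (-b * u) * (2 ^ q * (u ^ q + ζ ^ q)) :=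
            mul_le_mul_of_nonneg_left hsum (Real.exp_pos _).le
        _ = 2 ^ q * (Real.exp (-b * u) * u ^ q + ζ ^ q * Real.exp (-b * u)) := by ring
  -- final arithmetic
  have hζq : ζ ^ q ≤ 1 + ζ ^ (q + 1) := by
    rcases le_total ζ 1 with h | h
    · have h1 : ζ ^ q ≤ 1 := Real.rpow_le_one hζpos.le h hq
      have h2 : (0:ℝ) ≤ ζ ^ (q + 1) := Real.rpow_nonneg hζpos.le _
      linarith
    · have h1 : ζ ^ q ≤ ζ ^ (q + 1) := Real.rpow_le_rpow_of_exponent_le h (by linarith)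
      linarith
  have hfin : 2 ^ q * (G + ζ ^ q * E) ≤ 2 * D * (1 + ζ ^ (q + 1)) := by
    have hζq_nonneg : (0:ℝ) ≤ ζ ^ q := Real.rpow_nonneg hζpos.le q
    have hζq1_nonneg : (0:ℝ) ≤ ζ ^ (q + 1) := Real.rpow_nonneg hζpos.le _
    have h1 : 2 ^ q * G ≤ D := by nlinarith
    have h2 : 2 ^ q * E ≤ D := by nlinarith
    nlinarith
  -- put everything together
  have hnn : (0:ℝ) ≤ ∫ s in Ici ζ, Real.exp (-b * s) * s ^ q :=
    setIntegral_nonneg measurableSet_Ici (fun s hs =>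
      mul_nonneg (Real.exp_pos _).le (Real.rpow_nonneg (le_trans hζpos.le hs) q))
  calc Real.exp (β * Ktil ζ) * (∫ s in Ici ζ, Real.exp (-β * Ktil s) * s ^ q)
      ≤ Real.exp (β * Ktil ζ) * ((Real.exp (-β * Ktil ζ) * Real.exp (b * ζ)) *
          ∫ s in Ici ζ, Real.exp (-b * s) * s ^ q) :=
        mul_le_mul_of_nonneg_left step1 (Real.exp_pos _).le
    _ = Real.exp (b * ζ) * ∫ s in Ici ζ, Real.exp (-b * s) * s ^ q := by
        rw [← mul_assoc, ← mul_assoc, ← Real.exp_add]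
        ring_nf
        rw [Real.exp_zero, one_mul]
    _ = Real.exp (b * ζ) * ∫ u in Ici (0:ℝ), Real.exp (-b * (u + ζ)) * (u + ζ) ^ q := by
        rw [step2]
    _ ≤ 2 ^ q * (G + ζ ^ q * E) := step3
    _ ≤ 2 * D * (1 + ζ ^ (q + 1)) := hfin
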